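/- arXiv:2604.11151 — 5 statements merged into one kernel-verified Lean document; each statement's English description precedes it below -/
import Mathlib

section
/- Let Δ₁, …, Δ_T be vectors in ℝᵈ. Define M̂₁ = γ > 0 and M̂_{t+1} = max(M̂_t, ‖Δ_t‖), and let Δ̂_t = Δ_t · min(1, M̂_t/‖Δ_t‖) (with Δ̂_t = Δ_t if Δ_t = 0). Then ∑_{t=1}^T ‖Δ_t − Δ̂_t‖² ≤ (M̂_{T+1} − M̂₁)², and in particular ∑_{t=1}^T ‖Δ_t − Δ̂_t‖² ≤ 4G² whenever ‖Δ_t‖ ≤ 2G for all t. -/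
open Finset Classical

/-!
Clipping `Δ_t` at radius `M̂_t` removes exactly the part of its norm exceeding `M̂_t`, so the
clipping error has norm `max(M̂_t, ‖Δ_t‖) − M̂_t = M̂_{t+1} − M̂_t`. These errors telescope to
`M̂_{T+1} − M̂₁`, and a sum of squares of nonnegative numbers is at most the square of their
sum. Since `M̂` is a running maximum started at `γ > 0`, `M̂_{T+1} − M̂₁ ≤ 2G` once all
`‖Δ_t‖ ≤ 2G`.
-/

theorem norm_sub_clip_le {E : Type*} [NormedAddCommGroup E] [NormedSpace ℝ E] [DecidableEq E]
    (M : ℝ) (v : E) :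
    ‖v - (if v = 0 then v else min 1 (M / ‖v‖) • v)‖ ≤ max M ‖v‖ - M := by
  split_ifs with hv
  · simp [hv]
  have hn : 0 < ‖v‖ := norm_pos_iff.mpr hv
  set c := min 1 (M / ‖v‖)
  have hc : c * ‖v‖ = min ‖v‖ M := by
    rw [min_mul_of_nonneg _ _ hn.le, one_mul, div_mul_cancel₀ _ hn.ne']
  have hsub : v - c • v = (1 - c) • v := by rw [sub_smul, one_smul]
  rw [hsub, norm_smul, Real.norm_of_nonneg (sub_nonneg.2 (min_le_left _ _))]
  linarith [min_add_max ‖v‖ M, max_comm ‖v‖ M]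

theorem sum_Icc_le_sub_of_le_sub {a M : ℕ → ℝ} (h : ∀ t, a t ≤ M (t + 1) - M t) (T : ℕ) :
    ∑ t ∈ Icc 1 T, a t ≤ M (T + 1) - M 1 := by
  rw [← Ico_add_one_right_eq_Icc, ← sum_Ico_sub M (by omega : 1 ≤ T + 1)]
  exact sum_le_sum fun t _ => h t

theorem le_max_of_running_max {M x : ℕ → ℝ} (hM : ∀ t, M (t + 1) = max (M t) (x t)) {B : ℝ}
    {T : ℕ} (hx : ∀ t ∈ Icc 1 T, x t ≤ B) : M (T + 1) ≤ max (M 1) B := by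
  induction T with
  | zero => exact le_max_left _ _
  | succ n ih =>
    rw [hM]
    exact max_le (ih fun t ht => hx t (Icc_subset_Icc_right n.le_succ ht))
      (le_max_of_le_right (hx _ (right_mem_Icc.2 (by omega))))

theorem stmt_4_general {d : ℕ} (T : ℕ) (Δ : ℕ → EuclideanSpace ℝ (Fin d))
    (γ G : ℝ) (hγ : 0 < γ)
    (M : ℕ → ℝ) (hM1 : M 1 = γ)
    (hMrec : ∀ t, M (t + 1) = max (M t) ‖Δ t‖)
    (Δhat : ℕ → EuclideanSpace ℝ (Fin d))
    (hΔhat : ∀ t, Δhat t = if Δ t = 0 then Δ t else (min 1 (M t / ‖Δ t‖)) • Δ t) :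
    (∑ t ∈ Finset.Icc 1 T, ‖Δ t - Δhat t‖ ^ 2 ≤ (M (T + 1) - M 1) ^ 2) ∧
      ((∀ t ∈ Finset.Icc 1 T, ‖Δ t‖ ≤ 2 * G) →
        ∑ t ∈ Finset.Icc 1 T, ‖Δ t - Δhat t‖ ^ 2 ≤ 4 * G ^ 2) := by
  have hsum : ∑ t ∈ Icc 1 T, ‖Δ t - Δhat t‖ ≤ M (T + 1) - M 1 :=
    sum_Icc_le_sub_of_le_sub (fun t => hΔhat t ▸ hMrec t ▸ norm_sub_clip_le (M t) (Δ t)) T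
  have hsum_nonneg : 0 ≤ ∑ t ∈ Icc 1 T, ‖Δ t - Δhat t‖ := sum_nonneg fun _ _ => norm_nonneg _
  have hsq : ∑ t ∈ Icc 1 T, ‖Δ t - Δhat t‖ ^ 2 ≤ (M (T + 1) - M 1) ^ 2 :=
    (sum_sq_le_sq_sum_of_nonneg fun _ _ => norm_nonneg _).trans
      (pow_le_pow_left₀ hsum_nonneg hsum 2)
  refine ⟨hsq, fun hΔ => hsq.trans ?_⟩
  have hgrowth := le_max_of_running_max hMrec hΔ
  have hγM : 0 < M 1 := hM1 ▸ hγ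
  have hgap : M (T + 1) - M 1 ≤ |2 * G| := by
    rcases le_total (M 1) (2 * G) with h | h
    · rw [max_eq_right h] at hgrowth
      linarith [le_abs_self (2 * G)]
    · rw [max_eq_left h] at hgrowth
      linarith [abs_nonneg (2 * G)]
  calc (M (T + 1) - M 1) ^ 2 ≤ |2 * G| ^ 2 := pow_le_pow_left₀ (hsum_nonneg.trans hsum) hgap 2
    _ = 4 * G ^ 2 := by rw [sq_abs]; ring

/-- Telescoping bound for the virtual-clipping error: with `M̂₁ = γ`,
`M̂_{t+1} = max(M̂_t, ‖Δ_t‖)` and `Δ̂_t = min(1, M̂_t/‖Δ_t‖) • Δ_t`,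
`∑_{t=1}^T ‖Δ_t − Δ̂_t‖² ≤ (M̂_{T+1} − M̂₁)²`, and this is at most `4G²`
whenever `‖Δ_t‖ ≤ 2G` for all `t`. -/
theorem stmt_4 {d : ℕ} (T : ℕ) (Δ : ℕ → EuclideanSpace ℝ (Fin d))
    (γ G : ℝ) (hγ : 0 < γ) (hG : 0 ≤ G)
    (M : ℕ → ℝ) (hM1 : M 1 = γ)
    (hMrec : ∀ t, M (t + 1) = max (M t) ‖Δ t‖)
    (Δhat : ℕ → EuclideanSpace ℝ (Fin d))
    (hΔhat : ∀ t, Δhat t = if Δ t = 0 then Δ t else (min 1 (M t / ‖Δ t‖)) • Δ t) :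
    (∑ t ∈ Finset.Icc 1 T, ‖Δ t - Δhat t‖ ^ 2 ≤ (M (T + 1) - M 1) ^ 2) ∧
      ((∀ t ∈ Finset.Icc 1 T, ‖Δ t‖ ≤ 2 * G) →
        ∑ t ∈ Finset.Icc 1 T, ‖Δ t - Δhat t‖ ^ 2 ≤ 4 * G ^ 2) :=
  stmt_4_general T Δ γ G hγ M hM1 hMrec Δhat hΔhat
end

section
/- Let f₁, …, f_T : ℝᵈ → ℝ be differentiable, convex, L-smooth functions, and let w₁, …, w_T and u₁, …, u_T be points in ℝᵈ, with the convention f₀ ≡ 0. Then ∑_{t=1}^T ‖∇f_t(w_t) − ∇f_{t−1}(w_{t−1})‖² ≤ ‖∇f₁(w₁)‖² + 16L·∑_{t=1}^T D_{f_t}(u_t, w_t) + 4L²·∑_{t=2}^T ‖u_t − u_{t−1}‖² + 4·∑_{t=2}^T ‖∇f_t(u_{t−1}) − ∇f_{t−1}(u_{t−1})‖². -/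
/-!
Write `D_t = D_{f_t}(u_t, w_t)`. For `t ≥ 2`, route `∇f_t(w_t) − ∇f_{t−1}(w_{t−1})` through
`∇f_t(u_t)`, `∇f_t(u_{t−1})` and `∇f_{t−1}(u_{t−1})`; by `(a+b+c+e)² ≤ 4(a²+b²+c²+e²)` its square
is at most four times the sum of the squares of the four increments. The middle two are bounded by
smoothness and by the last sum of the statement; the outer two are increments of a single gradient
between `u` and `w`, bounded by co-coercivity `‖∇f(x) − ∇f(y)‖² ≤ 2L·D_f(x, y)`. Co-coercivity comes
from the descent lemma applied to the convex function `f − ⟪∇f(y), ·⟫`, which is minimal at `y`,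
along one gradient step of length `1/L` from `x`. Each `D_t` is charged by two consecutive steps,
whence the constant `16L`.
-/

open Finset RealInnerProductSpace

theorem norm_sum_sq_le_card_mul_sum_norm_sq {ι E : Type*} [SeminormedAddCommGroup E]
    (s : Finset ι) (a : ι → E) : ‖∑ i ∈ s, a i‖ ^ 2 ≤ #s * ∑ i ∈ s, ‖a i‖ ^ 2 :=
  (pow_le_pow_left₀ (norm_nonneg _) (norm_sum_le s a) 2).trans sq_sum_le_card_mul_sum_sq

section

variable {F : Type*} [NormedAddCommGroup F] [InnerProductSpace ℝ F] [CompleteSpace F]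

noncomputable def bregmanDiv (h : F → ℝ) (x y : F) : ℝ := h x - h y - ⟪gradient h y, x - y⟫

theorem HasGradientAt.hasDerivAt_comp_add_smul {h : F → ℝ} {g x v : F} {t : ℝ}
    (hg : HasGradientAt h g (x + t • v)) :
    HasDerivAt (fun s : ℝ => h (x + s • v)) ⟪g, v⟫ t := by
  have hline : HasDerivAt (fun s : ℝ => x + s • v) v t := by
    simpa using ((hasDerivAt_id t).smul_const v).const_add x
  exact (hasGradientAt_iff_hasFDerivAt.mp hg).comp_hasDerivAt t hline

theorem ConvexOn.add_inner_sub_le_of_hasGradientAt {h : F → ℝ} {g y : F}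
    (hconv : ConvexOn ℝ Set.univ h) (hg : HasGradientAt h g y) (x : F) :
    h y + ⟪g, x - y⟫ ≤ h x := by
  set φ : ℝ → ℝ := fun s => h (y + s • (x - y))
  have hφconv : ConvexOn ℝ Set.univ φ := by
    have hφ_eq : φ = h ∘ AffineMap.lineMap y x := by
      funext s
      simp [φ, AffineMap.lineMap_apply, add_comm]
    simpa [hφ_eq] using hconv.comp_affineMap (AffineMap.lineMap y x)
  have hφ : HasDerivAt φ ⟪g, x - y⟫ 0 :=
    HasGradientAt.hasDerivAt_comp_add_smul (by simpa using hg)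
  have hslope := hφconv.deriv_le_slope (Set.mem_univ 0) (Set.mem_univ 1) one_pos
    hφ.differentiableAt
  rw [hφ.deriv, slope_def_field] at hslope
  simp only [φ, one_smul, zero_smul, add_zero, add_sub_cancel, sub_zero, div_one] at hslope
  linarith

theorem bregmanDiv_nonneg {h : F → ℝ} (hconv : ConvexOn ℝ Set.univ h) (hdiff : Differentiable ℝ h)
    (x y : F) : 0 ≤ bregmanDiv h x y := by
  have := hconv.add_inner_sub_le_of_hasGradientAt (hdiff y).hasGradientAt x
  unfold bregmanDiv
  linarith

theorem le_add_inner_add_sq_of_lipschitz_gradient {h : F → ℝ} {G : F → F} {L : ℝ}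
    (hG : ∀ z, HasGradientAt h (G z) z) (hLip : ∀ a b, ‖G a - G b‖ ≤ L * ‖a - b‖) (x y : F) :
    h x ≤ h y + ⟪G y, x - y⟫ + L / 2 * ‖x - y‖ ^ 2 := by
  set v := x - y
  set φ : ℝ → ℝ := fun s => h (y + s • v) - s * ⟪G y, v⟫ - L / 2 * s ^ 2 * ‖v‖ ^ 2
  have hφ : ∀ s, HasDerivAt φ (⟪G (y + s • v), v⟫ - ⟪G y, v⟫ - L * s * ‖v‖ ^ 2) s := by
    intro s
    have := (((hG (y + s • v)).hasDerivAt_comp_add_smul).sub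
      ((hasDerivAt_id s).mul_const ⟪G y, v⟫)).sub
        (((hasDerivAt_pow 2 s).const_mul (L / 2)).mul_const (‖v‖ ^ 2))
    refine this.congr_deriv ?_
    simp only [Nat.cast_ofNat, Nat.add_one_sub_one, pow_one]
    ring
  obtain ⟨c, ⟨hc0, -⟩, hc⟩ := exists_hasDerivAt_eq_slope φ _ one_pos
    (fun s _ => (hφ s).continuousAt.continuousWithinAt) (fun s _ => hφ s)
  have hderiv_nonpos : ⟪G (y + c • v), v⟫ - ⟪G y, v⟫ - L * c * ‖v‖ ^ 2 ≤ 0 := by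
    have hcs : ⟪G (y + c • v) - G y, v⟫ ≤ ‖G (y + c • v) - G y‖ * ‖v‖ := real_inner_le_norm _ _
    have hlip : ‖G (y + c • v) - G y‖ ≤ L * (c * ‖v‖) := by
      simpa [norm_smul, abs_of_pos hc0] using hLip (y + c • v) y
    rw [inner_sub_left] at hcs
    nlinarith [norm_nonneg v]
  rw [hc] at hderiv_nonpos
  simp only [φ, v, one_smul, zero_smul, add_zero, add_sub_cancel] at hderiv_nonpos
  linarith

theorem HasGradientAt.sub_inner {h : F → ℝ} {g' x : F} (hg : HasGradientAt h g' x) (g : F) :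
    HasGradientAt (fun z => h z - ⟪g, z⟫) (g' - g) x := by
  rw [hasGradientAt_iff_hasFDerivAt, map_sub]
  exact (hasGradientAt_iff_hasFDerivAt.mp hg).sub (InnerProductSpace.toDual ℝ F g).hasFDerivAt

theorem sq_norm_gradient_sub_le_bregmanDiv {h : F → ℝ} {L : ℝ} (hL : 0 ≤ L)
    (hconv : ConvexOn ℝ Set.univ h) (hdiff : Differentiable ℝ h)
    (hLip : ∀ a b, ‖gradient h a - gradient h b‖ ≤ L * ‖a - b‖) (x y : F) :
    ‖gradient h x - gradient h y‖ ^ 2 ≤ 2 * L * bregmanDiv h x y := by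
  rcases hL.eq_or_lt with rfl | hLpos
  · simpa using hLip x y
  set ht : F → ℝ := fun z => h z - ⟪gradient h y, z⟫
  set Gt : F → F := fun z => gradient h z - gradient h y
  have hGt : ∀ z, HasGradientAt ht (Gt z) z :=
    fun z => (hdiff z).hasGradientAt.sub_inner _
  have htconv : ConvexOn ℝ Set.univ ht :=
    hconv.sub ((InnerProductSpace.toDual ℝ F (gradient h y)).toLinearMap.concaveOn convex_univ)
  have hmin : ∀ z, ht y ≤ ht z := fun z => by
    simpa [Gt] using htconv.add_inner_sub_le_of_hasGradientAt (hGt y) z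
  have hstep := le_add_inner_add_sq_of_lipschitz_gradient hGt
    (fun a b => by simpa [Gt] using hLip a b) (x - L⁻¹ • Gt x) x
  have hdrop : ht (x - L⁻¹ • Gt x) ≤ ht x - ‖Gt x‖ ^ 2 / (2 * L) := by
    simp only [sub_sub_cancel_left, inner_neg_right, real_inner_smul_right, norm_neg, norm_smul,
      real_inner_self_eq_norm_sq, Real.norm_eq_abs, abs_of_pos (inv_pos.mpr hLpos)] at hstep
    convert hstep using 1
    field_simp
    ring
  have hbreg : ht x - ht y = bregmanDiv h x y := by
    simp only [ht, bregmanDiv, inner_sub_right]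
    ring
  have hgap : ‖Gt x‖ ^ 2 / (2 * L) ≤ bregmanDiv h x y := by linarith [(hmin _).trans hdrop]
  rwa [div_le_iff₀ (by positivity), mul_comm] at hgap

theorem sq_norm_gradient_sub_gradient_le {h₀ h₁ : F → ℝ} {L : ℝ} (hL : 0 ≤ L)
    (hconv₀ : ConvexOn ℝ Set.univ h₀) (hconv₁ : ConvexOn ℝ Set.univ h₁)
    (hdiff₀ : Differentiable ℝ h₀) (hdiff₁ : Differentiable ℝ h₁)
    (hLip₀ : ∀ a b, ‖gradient h₀ a - gradient h₀ b‖ ≤ L * ‖a - b‖)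
    (hLip₁ : ∀ a b, ‖gradient h₁ a - gradient h₁ b‖ ≤ L * ‖a - b‖) (w₀ w₁ u₀ u₁ : F) :
    ‖gradient h₁ w₁ - gradient h₀ w₀‖ ^ 2 ≤
      8 * L * bregmanDiv h₁ u₁ w₁ + 8 * L * bregmanDiv h₀ u₀ w₀
        + (4 * L ^ 2 * ‖u₁ - u₀‖ ^ 2 + 4 * ‖gradient h₁ u₀ - gradient h₀ u₀‖ ^ 2) := by
  have hfour := norm_sum_sq_le_card_mul_sum_norm_sq univ
    ![gradient h₁ w₁ - gradient h₁ u₁, gradient h₁ u₁ - gradient h₁ u₀,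
      gradient h₁ u₀ - gradient h₀ u₀, gradient h₀ u₀ - gradient h₀ w₀]
  simp only [Fin.sum_univ_four, Matrix.cons_val, sub_add_sub_cancel, card_fin,
    Nat.succ_eq_add_one, Nat.reduceAdd, Nat.cast_ofNat] at hfour
  have hco₁ := sq_norm_gradient_sub_le_bregmanDiv hL hconv₁ hdiff₁ hLip₁ u₁ w₁
  have hco₀ := sq_norm_gradient_sub_le_bregmanDiv hL hconv₀ hdiff₀ hLip₀ u₀ w₀
  have hmove : ‖gradient h₁ u₁ - gradient h₁ u₀‖ ^ 2 ≤ L ^ 2 * ‖u₁ - u₀‖ ^ 2 := by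
    rw [← mul_pow]
    exact pow_le_pow_left₀ (norm_nonneg _) (hLip₁ u₁ u₀) 2
  rw [norm_sub_rev] at hco₁
  linarith

end

theorem sum_Icc_le_of_le_add_pred {T : ℕ} {a D b : ℕ → ℝ} (ha : 0 ≤ a 1)
    (hD : ∀ t ∈ Icc 1 T, 0 ≤ D t) (hstep : ∀ t ∈ Icc 2 T, a t ≤ D t + D (t - 1) + b t) :
    ∑ t ∈ Icc 1 T, a t ≤ a 1 + 2 * ∑ t ∈ Icc 1 T, D t + ∑ t ∈ Icc 2 T, b t := by
  rcases Nat.eq_zero_or_pos T with rfl | hT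
  · simpa using ha
  have hcurr : ∑ t ∈ Icc 2 T, D t ≤ ∑ t ∈ Icc 1 T, D t :=
    sum_le_sum_of_subset_of_nonneg (Icc_subset_Icc_left one_le_two) fun t ht _ => hD t ht
  have hprev : ∑ t ∈ Icc 2 T, D (t - 1) ≤ ∑ t ∈ Icc 1 T, D t := by
    rw [← sum_image (g := (· - 1)) fun s hs t ht hst => by
      simp only [coe_Icc, Set.mem_Icc] at hs ht hst
      omega]
    refine sum_le_sum_of_subset_of_nonneg (fun s hs => ?_) fun t ht _ => hD t ht
    obtain ⟨t, ht, rfl⟩ := mem_image.mp hs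
    rw [mem_Icc] at ht ⊢
    omega
  have hsum := sum_le_sum hstep
  rw [sum_add_distrib, sum_add_distrib] at hsum
  have hfirst : ∑ t ∈ Icc 1 T, a t = a 1 + ∑ t ∈ Icc 2 T, a t := by
    rw [← insert_Icc_add_one_left_eq_Icc hT, sum_insert (by simp), one_add_one_eq_two]
  linarith

/-- Gradient-variation decomposition (Lemma `tedius-calculations`, first part):
for convex differentiable `L`-smooth `f₁,…,f_T` with `f₀ ≡ 0`,
`∑_{t=1}^T ‖∇f_t(w_t) − ∇f_{t−1}(w_{t−1})‖²
  ≤ ‖∇f₁(w₁)‖² + 16L ∑_{t=1}^T D_{f_t}(u_t, w_t)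
    + 4L² ∑_{t=2}^T ‖u_t − u_{t−1}‖² + 4 ∑_{t=2}^T ‖∇f_t(u_{t−1}) − ∇f_{t−1}(u_{t−1})‖²`. -/
theorem stmt_8 {d : ℕ} (T : ℕ) (L : ℝ) (hL : 0 ≤ L)
    (f : ℕ → EuclideanSpace ℝ (Fin d) → ℝ)
    (hf0 : f 0 = fun _ => (0 : ℝ))
    (hconv : ∀ t ∈ Finset.Icc 1 T, ConvexOn ℝ Set.univ (f t))
    (hdiff : ∀ t ∈ Finset.Icc 1 T, Differentiable ℝ (f t))
    (hsmooth : ∀ t ∈ Finset.Icc 1 T, ∀ x y,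
      ‖gradient (f t) x - gradient (f t) y‖ ≤ L * ‖x - y‖)
    (w u : ℕ → EuclideanSpace ℝ (Fin d)) :
    ∑ t ∈ Finset.Icc 1 T, ‖gradient (f t) (w t) - gradient (f (t - 1)) (w (t - 1))‖ ^ 2 ≤
      ‖gradient (f 1) (w 1)‖ ^ 2
      + 16 * L * ∑ t ∈ Finset.Icc 1 T,
          (f t (u t) - f t (w t) - ⟪gradient (f t) (w t), u t - w t⟫)
      + 4 * L ^ 2 * ∑ t ∈ Finset.Icc 2 T, ‖u t - u (t - 1)‖ ^ 2
      + 4 * ∑ t ∈ Finset.Icc 2 T,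
          ‖gradient (f t) (u (t - 1)) - gradient (f (t - 1)) (u (t - 1))‖ ^ 2 := by
  have hbreg : ∀ t ∈ Icc 1 T, 0 ≤ 8 * L * bregmanDiv (f t) (u t) (w t) := fun t ht =>
    mul_nonneg (by positivity) (bregmanDiv_nonneg (hconv t ht) (hdiff t ht) _ _)
  have hstep : ∀ t ∈ Icc 2 T, ‖gradient (f t) (w t) - gradient (f (t - 1)) (w (t - 1))‖ ^ 2 ≤
      8 * L * bregmanDiv (f t) (u t) (w t) + 8 * L * bregmanDiv (f (t - 1)) (u (t - 1)) (w (t - 1))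
        + (4 * L ^ 2 * ‖u t - u (t - 1)‖ ^ 2
          + 4 * ‖gradient (f t) (u (t - 1)) - gradient (f (t - 1)) (u (t - 1))‖ ^ 2) := by
    intro t ht
    rw [mem_Icc] at ht
    have hprev : t - 1 ∈ Icc 1 T := mem_Icc.mpr (by omega)
    have hcurr : t ∈ Icc 1 T := mem_Icc.mpr (by omega)
    exact sq_norm_gradient_sub_gradient_le hL (hconv _ hprev) (hconv t hcurr) (hdiff _ hprev)
      (hdiff t hcurr) (hsmooth _ hprev) (hsmooth t hcurr) _ _ _ _
  have hf1 : gradient (f (1 - 1)) (w (1 - 1)) = 0 := by simp [hf0]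
  calc _ ≤ _ := sum_Icc_le_of_le_add_pred (by positivity) hbreg hstep
    _ = _ := by
      simp only [hf1, sub_zero, bregmanDiv, sum_add_distrib, ← mul_sum]
      ring
end

section
/- Let f₁, …, f_T : ℝᵈ → ℝ be differentiable, convex, L-smooth functions each bounded below, and let w₁, …, w_T and u₁, …, u_T be points in ℝᵈ, with f₀ ≡ 0. Then ∑_{t=1}^T ‖∇f_t(w_t) − ∇f_{t−1}(w_{t−1})‖² ≤ 16L·∑_{t=1}^T (f_t(u_t) − inf_w f_t(w)) + 16L·∑_{t=1}^T D_{f_t}(u_t, w_t). -/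
/-!
For each `t`, split `∇f_t(w_t) = ∇f_t(u_t) - (∇f_t(u_t) - ∇f_t(w_t))`. The first term is
controlled by the self-bounding inequality `‖∇f(x)‖² ≤ 2L (f x - inf f)`, which comes from one
gradient step in the descent lemma; the second by co-coercivity
`‖∇f(x) - ∇f(y)‖² ≤ 2L D_f(x, y)`, which is the self-bounding inequality applied to `f` tilted
by `⟪∇f(y), ·⟫`. Hence `‖∇f_t(w_t)‖² ≤ 4L ((f_t(u_t) - inf f_t) + D_{f_t}(u_t, w_t))`, and
`‖a_t - a_{t-1}‖² ≤ 2‖a_t‖² + 2‖a_{t-1}‖²` with `a_0 = 0` gives the extra factor `4`.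
-/

open Finset RealInnerProductSpace InnerProductSpace

theorem sum_Icc_one_pred_add {M : Type*} [AddCommMonoid M] (b : ℕ → M) (T : ℕ) :
    ∑ t ∈ Icc 1 T, b (t - 1) + b T = b 0 + ∑ t ∈ Icc 1 T, b t := by
  induction T with
  | zero => simp [add_comm]
  | succ T ih =>
    rw [sum_Icc_succ_top (by omega), sum_Icc_succ_top (by omega), Nat.add_sub_cancel,
      ih, add_assoc]

theorem norm_sub_sq_le {E : Type*} [SeminormedAddCommGroup E] (a b : E) :
    ‖a - b‖ ^ 2 ≤ 2 * ‖a‖ ^ 2 + 2 * ‖b‖ ^ 2 := by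
  have := pow_le_pow_left₀ (norm_nonneg _) (norm_sub_le a b) 2
  linarith [add_sq_le (a := ‖a‖) (b := ‖b‖)]

theorem sum_norm_sub_pred_sq_le {E : Type*} [SeminormedAddCommGroup E] (a : ℕ → E)
    (ha : a 0 = 0) (T : ℕ) :
    ∑ t ∈ Icc 1 T, ‖a t - a (t - 1)‖ ^ 2 ≤ 4 * ∑ t ∈ Icc 1 T, ‖a t‖ ^ 2 := by
  have shift := sum_Icc_one_pred_add (fun t => ‖a t‖ ^ 2) T
  simp only [ha, norm_zero] at shift
  calc ∑ t ∈ Icc 1 T, ‖a t - a (t - 1)‖ ^ 2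
      ≤ ∑ t ∈ Icc 1 T, (2 * ‖a t‖ ^ 2 + 2 * ‖a (t - 1)‖ ^ 2) :=
        sum_le_sum fun t _ => norm_sub_sq_le _ _
    _ ≤ 4 * ∑ t ∈ Icc 1 T, ‖a t‖ ^ 2 := by
        rw [sum_add_distrib, ← mul_sum, ← mul_sum]
        nlinarith [sq_nonneg ‖a T‖]

section Smooth

variable {F : Type*} [NormedAddCommGroup F] [InnerProductSpace ℝ F] [CompleteSpace F]

noncomputable def bregman (f : F → ℝ) (x y : F) : ℝ :=
  f x - f y - ⟪gradient f y, x - y⟫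

variable {f : F → ℝ} {L : ℝ}

theorem Differentiable.hasDerivAt_comp_add_smul (hf : Differentiable ℝ f) (x v : F) (s : ℝ) :
    HasDerivAt (fun r : ℝ => f (x + r • v)) ⟪gradient f (x + s • v), v⟫ s := by
  have hline : HasDerivAt (fun r : ℝ => x + r • v) v s := by
    simpa using ((hasDerivAt_id s).smul_const v).const_add x
  simpa [Function.comp_def] using
    (hasGradientAt_iff_hasFDerivAt.1 (hf _).hasGradientAt).comp_hasDerivAt s hline

theorem ConvexOn.add_le_of_hasDerivAt_zero {g : ℝ → ℝ} (hg : ConvexOn ℝ Set.univ g) {g' : ℝ}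
    (hd : HasDerivAt g g' 0) : g 0 + g' ≤ g 1 := by
  have h := hg.le_slope_of_hasDerivAt (Set.mem_univ 0) (Set.mem_univ 1) one_pos hd
  rw [slope_def_field] at h
  linarith [show (g 1 - g 0) / (1 - 0) = g 1 - g 0 by simp]

theorem ConvexOn.add_inner_gradient_le (hconv : ConvexOn ℝ Set.univ f)
    (hf : Differentiable ℝ f) (x y : F) : f x + ⟪gradient f x, y - x⟫ ≤ f y := by
  have hline : ConvexOn ℝ Set.univ (fun r : ℝ => f (x + r • (y - x))) := by
    have hcomp : (fun r : ℝ => f (x + r • (y - x))) = f ∘ AffineMap.lineMap x y := by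
      ext r
      simp [AffineMap.lineMap_apply, add_comm]
    simpa [hcomp] using hconv.comp_affineMap (AffineMap.lineMap x y)
  simpa using ConvexOn.add_le_of_hasDerivAt_zero hline
    (by simpa using hf.hasDerivAt_comp_add_smul x (y - x) 0)

theorem le_add_inner_gradient_add_sq (hf : Differentiable ℝ f)
    (hsm : ∀ x y, ‖gradient f x - gradient f y‖ ≤ L * ‖x - y‖) (x y : F) :
    f y ≤ f x + ⟪gradient f x, y - x⟫ + L / 2 * ‖y - x‖ ^ 2 := by
  set v := y - x
  -- `p` is convex because its derivative is monotone, by Cauchy–Schwarz and the Lipschitz bound.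
  set p : ℝ → ℝ := fun s => L * ‖v‖ ^ 2 / 2 * s ^ 2 - f (x + s • v)
  have hp : ∀ s, HasDerivAt p (L * ‖v‖ ^ 2 * s - ⟪gradient f (x + s • v), v⟫) s := fun s => by
    refine (((hasDerivAt_pow 2 s).const_mul (L * ‖v‖ ^ 2 / 2)).sub
      (hf.hasDerivAt_comp_add_smul x v s)).congr_deriv ?_
    push_cast
    ring
  have hmono : Monotone (deriv p) := by
    intro s t hst
    simp only [(hp _).deriv]
    have hdist : ‖x + t • v - (x + s • v)‖ = (t - s) * ‖v‖ := by
      rw [add_sub_add_left_eq_sub, ← sub_smul, norm_smul, Real.norm_of_nonneg (sub_nonneg.2 hst)]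
    have := calc ⟪gradient f (x + t • v) - gradient f (x + s • v), v⟫
        ≤ ‖gradient f (x + t • v) - gradient f (x + s • v)‖ * ‖v‖ := real_inner_le_norm _ _
      _ ≤ L * ((t - s) * ‖v‖) * ‖v‖ := by
        rw [← hdist]; exact mul_le_mul_of_nonneg_right (hsm _ _) (norm_nonneg v)
    rw [inner_sub_left] at this
    nlinarith
  have := ConvexOn.add_le_of_hasDerivAt_zero
    (hmono.convexOn_univ_of_deriv fun s => (hp s).differentiableAt) (hp 0)
  simp only [p, zero_smul, one_smul, add_zero, v, add_sub_cancel] at this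
  simp only [v]
  linarith

theorem sq_norm_gradient_le (hL : 0 ≤ L) (hf : Differentiable ℝ f)
    (hsm : ∀ x y, ‖gradient f x - gradient f y‖ ≤ L * ‖x - y‖) {m : ℝ} (hm : ∀ z, m ≤ f z)
    (x : F) : ‖gradient f x‖ ^ 2 ≤ 2 * L * (f x - m) := by
  set g := gradient f x
  have hstep : ∀ s : ℝ, s * (2 - L * s) * ‖g‖ ^ 2 ≤ 2 * (f x - m) := fun s => by
    have h := le_add_inner_gradient_add_sq hf hsm x (x - s • g)
    rw [sub_sub_cancel_left, inner_neg_right, real_inner_smul_right, real_inner_self_eq_norm_sq,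
      norm_neg, norm_smul, Real.norm_eq_abs, mul_pow, sq_abs] at h
    nlinarith [hm (x - s • g)]
  rcases hL.eq_or_lt with rfl | hLpos
  · have hfx := hm x
    have hg : ‖g‖ ^ 2 ≤ 0 := by
      by_contra! hg
      have := hstep ((f x - m + 1) / ‖g‖ ^ 2)
      rw [zero_mul, sub_zero, mul_right_comm, div_mul_cancel₀ _ hg.ne'] at this
      linarith
    linarith
  · have h := hstep L⁻¹
    rw [mul_inv_cancel₀ hLpos.ne', show (2 : ℝ) - 1 = 1 by norm_num, mul_one,
      inv_mul_le_iff₀ hLpos] at h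
    linarith

theorem ConvexOn.sq_norm_gradient_sub_le_bregman (hL : 0 ≤ L) (hconv : ConvexOn ℝ Set.univ f)
    (hf : Differentiable ℝ f) (hsm : ∀ x y, ‖gradient f x - gradient f y‖ ≤ L * ‖x - y‖)
    (x y : F) : ‖gradient f x - gradient f y‖ ^ 2 ≤ 2 * L * bregman f x y := by
  set b := gradient f y
  set φ : F → ℝ := f - toDual ℝ F b
  have hφgrad : ∀ z, HasGradientAt φ (gradient f z - b) z := fun z => by
    rw [hasGradientAt_iff_hasFDerivAt, map_sub]
    exact (hf z).hasGradientAt.hasFDerivAt.sub (toDual ℝ F b).hasFDerivAt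
  have hφdiff : Differentiable ℝ φ := fun z => (hφgrad z).differentiableAt
  have hφconv : ConvexOn ℝ Set.univ φ :=
    hconv.sub ((toDual ℝ F b).toLinearMap.concaveOn convex_univ)
  have hφsm : ∀ p q, ‖gradient φ p - gradient φ q‖ ≤ L * ‖p - q‖ := fun p q => by
    rw [(hφgrad p).gradient, (hφgrad q).gradient, sub_sub_sub_cancel_right]
    exact hsm p q
  have hmin : ∀ z, φ y ≤ φ z := fun z => by
    simpa [(hφgrad y).gradient, b] using hφconv.add_inner_gradient_le hφdiff y z
  have h := sq_norm_gradient_le hL hφdiff hφsm hmin x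
  rw [(hφgrad x).gradient] at h
  convert h using 2
  simp only [bregman, φ, Pi.sub_apply, toDual_apply_apply, inner_sub_right, b]
  ring

theorem ConvexOn.sq_norm_gradient_le_bregman_add (hL : 0 ≤ L) (hconv : ConvexOn ℝ Set.univ f)
    (hf : Differentiable ℝ f) (hsm : ∀ x y, ‖gradient f x - gradient f y‖ ≤ L * ‖x - y‖)
    {m : ℝ} (hm : ∀ z, m ≤ f z) (w u : F) :
    ‖gradient f w‖ ^ 2 ≤ 4 * L * ((f u - m) + bregman f u w) := by
  calc ‖gradient f w‖ ^ 2 = ‖gradient f u - (gradient f u - gradient f w)‖ ^ 2 := by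
        rw [sub_sub_cancel]
    _ ≤ 2 * ‖gradient f u‖ ^ 2 + 2 * ‖gradient f u - gradient f w‖ ^ 2 := norm_sub_sq_le _ _
    _ ≤ 2 * (2 * L * (f u - m)) + 2 * (2 * L * bregman f u w) := by
        gcongr
        · exact sq_norm_gradient_le hL hf hsm hm u
        · exact hconv.sq_norm_gradient_sub_le_bregman hL hf hsm u w
    _ = 4 * L * ((f u - m) + bregman f u w) := by ring

end Smooth

/-- Gradient-variation decomposition via comparator loss (Lemma `tedius-calculations`,
second part): for convex differentiable `L`-smooth `f₁,…,f_T` bounded below, `f₀ ≡ 0`,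
`∑_{t=1}^T ‖∇f_t(w_t) − ∇f_{t−1}(w_{t−1})‖²
  ≤ 16L ∑_{t=1}^T (f_t(u_t) − inf f_t) + 16L ∑_{t=1}^T D_{f_t}(u_t, w_t)`. -/
theorem stmt_9 {d : ℕ} (T : ℕ) (L : ℝ) (hL : 0 ≤ L)
    (f : ℕ → EuclideanSpace ℝ (Fin d) → ℝ)
    (hf0 : f 0 = fun _ => (0 : ℝ))
    (hconv : ∀ t ∈ Finset.Icc 1 T, ConvexOn ℝ Set.univ (f t))
    (hdiff : ∀ t ∈ Finset.Icc 1 T, Differentiable ℝ (f t))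
    (hsmooth : ∀ t ∈ Finset.Icc 1 T, ∀ x y,
      ‖gradient (f t) x - gradient (f t) y‖ ≤ L * ‖x - y‖)
    (hbdd : ∀ t ∈ Finset.Icc 1 T, BddBelow (Set.range (f t)))
    (w u : ℕ → EuclideanSpace ℝ (Fin d)) :
    ∑ t ∈ Finset.Icc 1 T, ‖gradient (f t) (w t) - gradient (f (t - 1)) (w (t - 1))‖ ^ 2 ≤
      16 * L * ∑ t ∈ Finset.Icc 1 T, (f t (u t) - ⨅ v, f t v)
      + 16 * L * ∑ t ∈ Finset.Icc 1 T,
          (f t (u t) - f t (w t) - ⟪gradient (f t) (w t), u t - w t⟫) := by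
  have hgrad0 : gradient (f 0) (w 0) = 0 := by
    rw [hf0]
    exact gradient_fun_const _ _
  calc _ ≤ 4 * ∑ t ∈ Icc 1 T, ‖gradient (f t) (w t)‖ ^ 2 :=
        sum_norm_sub_pred_sq_le (fun t => gradient (f t) (w t)) hgrad0 T
    _ ≤ 4 * ∑ t ∈ Icc 1 T, 4 * L * ((f t (u t) - ⨅ v, f t v) + bregman (f t) (u t) (w t)) := by
        gcongr with t ht
        exact (hconv t ht).sq_norm_gradient_le_bregman_add hL (hdiff t ht) (hsmooth t ht)
          (ciInf_le (hbdd t ht)) (w t) (u t)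
    _ = _ := by
        simp only [mul_sum, ← sum_add_distrib]
        refine sum_congr rfl fun t _ => ?_
        rw [bregman]
        ring
end

section
/- Let W ⊆ ℝᵈ be a nonempty closed convex set of diameter at most D, and consider one-step optimistic projected gradient descent: w_{t+1} = Π_W[w_t − η_{t+1}(g_t − h_t + h_{t+1})] with non-increasing step sizes η_t > 0 and h₁ = 0. Then for any comparator sequence u₁, …, u_T in W: ∑_{t=1}^T ⟨g_t, w_t − u_t⟩ ≤ (5D² + 12D·P_T)/(8η_{T+1}) + ∑_{t=1}^T 2η_{t+1}‖g_t − h_t‖² − ∑_{t=1}^{T−1} (1/(4η_{t+1}))‖w_t − w_{t+1}‖², where P_T = ∑_{t=2}^T ‖u_t − u_{t−1}‖. -/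
/-
Projection onto `W` gives, for every round, the three-point inequality
`2η_{t+1}⟪g_t - h_t + h_{t+1}, w_{t+1} - u⟫ ≤ ‖w_t - u‖² - ‖w_t - w_{t+1}‖² - ‖w_{t+1} - u‖²`.
Splitting `g_{t+1} = (g_{t+1} - h_{t+1}) + (g_t - h_t + h_{t+1}) - (g_t - h_t)`, the optimism error
`⟪g_t - h_t, w_t - u_t⟫` of round `t` is exchanged for `⟪g_t - h_t, w_{t+1} - u_{t+1}⟫` at the
price `⟪g_t - h_t, (w_t - w_{t+1}) + (u_{t+1} - u_t)⟫`, which Young's inequality pays against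
`‖w_t - w_{t+1}‖²` and the comparator drift; moving the comparator from `u_t` to `u_{t+1}` costs
`2D‖u_{t+1} - u_t‖` in the squared distance. With non-increasing step sizes, the regret of the
first `S` rounds is therefore bounded by a potential `Φ_S`, and one more application of Young's
inequality to the error term left in `Φ_T` gives the bound.
-/

open Finset RealInnerProductSpace

section Seminormed

variable {E : Type*} [SeminormedAddCommGroup E]

theorem sq_norm_sub_le_sq_norm_sub_add {a b c : E} {D : ℝ} (hac : ‖a - c‖ ≤ D)
    (hab : ‖a - b‖ ≤ D) : ‖a - c‖ ^ 2 ≤ ‖a - b‖ ^ 2 + 2 * D * ‖c - b‖ := by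
  have h : ‖a - c‖ - ‖a - b‖ ≤ ‖c - b‖ := by
    simpa [norm_sub_rev b c] using norm_sub_norm_le (a - c) (a - b)
  nlinarith [mul_le_mul_of_nonneg_right h (add_nonneg (norm_nonneg (a - c)) (norm_nonneg (a - b))),
    mul_le_mul_of_nonneg_left (add_le_add hac hab) (norm_nonneg (c - b))]

noncomputable def pathLength (u : ℕ → E) (T : ℕ) : ℝ := ∑ t ∈ Icc 2 T, ‖u t - u (t - 1)‖

theorem pathLength_nonneg (u : ℕ → E) (T : ℕ) : 0 ≤ pathLength u T :=
  sum_nonneg fun _ _ => norm_nonneg _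

theorem pathLength_succ (u : ℕ → E) {T : ℕ} (hT : 1 ≤ T) :
    pathLength u (T + 1) = pathLength u T + ‖u (T + 1) - u T‖ := by
  rw [pathLength, sum_Icc_succ_top (by omega), Nat.add_sub_cancel, pathLength]

end Seminormed

variable {E : Type*} [NormedAddCommGroup E] [InnerProductSpace ℝ E]

theorem real_inner_le_mul_norm_sq_add_norm_sq_div (x y : E) {c : ℝ} (hc : 0 < c) :
    ⟪x, y⟫ ≤ c * ‖x‖ ^ 2 + ‖y‖ ^ 2 / (4 * c) := by
  have h := real_inner_le_norm x y
  rw [← sub_le_iff_le_add', le_div_iff₀ (by positivity)]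
  nlinarith [sq_nonneg (2 * c * ‖x‖ - ‖y‖)]

theorem real_inner_sub_le_zero_of_forall_norm_sub_le {K : Set E} (hK : Convex ℝ K) {p z : E}
    (hz : z ∈ K) (hmin : ∀ v ∈ K, ‖z - p‖ ≤ ‖v - p‖) {v : E} (hv : v ∈ K) :
    ⟪p - z, v - z⟫ ≤ 0 := by
  have : Nonempty K := ⟨⟨z, hz⟩⟩
  refine (norm_eq_iInf_iff_real_inner_le_zero hK hz).1 (le_antisymm ?_ ?_) v hv
  · exact le_ciInf fun v => by simpa only [norm_sub_rev p] using hmin v v.2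
  · exact ciInf_le ⟨0, Set.forall_mem_range.2 fun _ => norm_nonneg _⟩ (⟨z, hz⟩ : K)

theorem two_mul_inner_le_of_forall_norm_sub_le {K : Set E} (hK : Convex ℝ K) {x m x' u : E}
    {η : ℝ} (hx' : x' ∈ K) (hmin : ∀ v ∈ K, ‖x' - (x - η • m)‖ ≤ ‖v - (x - η • m)‖)
    (hu : u ∈ K) : 2 * η * ⟪m, x' - u⟫ ≤ ‖x - u‖ ^ 2 - ‖x - x'‖ ^ 2 - ‖x' - u‖ ^ 2 := by
  have hvi := real_inner_sub_le_zero_of_forall_norm_sub_le hK hx' hmin hu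
  rw [show x - η • m - x' = (x - x') - η • m by abel, show u - x' = -(x' - u) by abel,
    inner_neg_right, inner_sub_left, real_inner_smul_left] at hvi
  rw [show x - u = (x - x') + (x' - u) by abel, norm_add_sq_real]
  linarith

theorem inner_le_of_optimistic_step {K : Set E} (hK : Convex ℝ K) {D η : ℝ}
    (hD : ∀ x ∈ K, ∀ y ∈ K, ‖x - y‖ ≤ D) (hη : 0 < η) {w₀ w₁ u₀ u₁ e₀ g₁ h₁ : E}
    (hw₀ : w₀ ∈ K) (hu₀ : u₀ ∈ K) (hu₁ : u₁ ∈ K) (hw₁ : w₁ ∈ K)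
    (hmin : ∀ v ∈ K, ‖w₁ - (w₀ - η • (e₀ + h₁))‖ ≤ ‖v - (w₀ - η • (e₀ + h₁))‖) :
    ⟪g₁, w₁ - u₁⟫ ≤ ⟪g₁ - h₁, w₁ - u₁⟫ - ⟪e₀, w₀ - u₀⟫ + 2 * η * ‖e₀‖ ^ 2
      + (‖w₀ - u₀‖ ^ 2 - ‖w₁ - u₁‖ ^ 2) / (2 * η) + 5 * D * ‖u₁ - u₀‖ / (4 * η)
      - ‖w₀ - w₁‖ ^ 2 / (4 * η) := by
  have hsplit : ⟪g₁, w₁ - u₁⟫ = ⟪g₁ - h₁, w₁ - u₁⟫ + ⟪e₀ + h₁, w₁ - u₁⟫ - ⟪e₀, w₀ - u₀⟫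
      + ⟪e₀, w₀ - w₁⟫ + ⟪e₀, u₁ - u₀⟫ := by
    simp only [inner_sub_left, inner_add_left, inner_sub_right]
    ring
  have hproj := two_mul_inner_le_of_forall_norm_sub_le hK hw₁ hmin hu₁
  have hshift := sq_norm_sub_le_sq_norm_sub_add (hD _ hw₀ _ hu₁) (hD _ hw₀ _ hu₀)
  have hyoung_w := real_inner_le_mul_norm_sq_add_norm_sq_div e₀ (w₀ - w₁) hη
  have hyoung_u := real_inner_le_mul_norm_sq_add_norm_sq_div e₀ (u₁ - u₀) hη
  have hdrift : ‖u₁ - u₀‖ ^ 2 / (4 * η) ≤ D * ‖u₁ - u₀‖ / (4 * η) := by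
    gcongr
    rw [sq]
    exact mul_le_mul_of_nonneg_right (hD _ hu₁ _ hu₀) (norm_nonneg _)
  have hopt : ⟪e₀ + h₁, w₁ - u₁⟫ ≤
      (‖w₀ - u₀‖ ^ 2 + 2 * D * ‖u₁ - u₀‖ - ‖w₀ - w₁‖ ^ 2 - ‖w₁ - u₁‖ ^ 2) / (2 * η) := by
    rw [le_div_iff₀ (by positivity)]
    linarith
  linear_combination hsplit + hopt + hyoung_w + hyoung_u + hdrift

/-- The potential `Φ_S`; its first term is the optimism error of round `S`, still to be paid. -/
noncomputable def oogdPotential (D : ℝ) (η : ℕ → ℝ) (g h w u : ℕ → E) (S : ℕ) : ℝ :=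
  ⟪g S - h S, w S - u S⟫ + (D ^ 2 - ‖w S - u S‖ ^ 2) / (2 * η (S + 1))
    + 3 * D * pathLength u S / (2 * η (S + 1))
    + ∑ t ∈ Ico 1 S, (2 * η (t + 1) * ‖g t - h t‖ ^ 2 - ‖w t - w (t + 1)‖ ^ 2 / (4 * η (t + 1)))

section Potential

variable {K : Set E} {D : ℝ} {η : ℕ → ℝ} {g h w u : ℕ → E}

theorem inner_le_oogdPotential_succ_sub (hK : Convex ℝ K) (hD : ∀ x ∈ K, ∀ y ∈ K, ‖x - y‖ ≤ D)
    {S : ℕ} (hS : 1 ≤ S) (hη : 0 < η (S + 1 + 1)) (hmono : η (S + 1 + 1) ≤ η (S + 1))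
    (hw₀ : w S ∈ K) (hu₀ : u S ∈ K) (hu₁ : u (S + 1) ∈ K) (hw₁ : w (S + 1) ∈ K)
    (hmin : ∀ v ∈ K, ‖w (S + 1) - (w S - η (S + 1) • (g S - h S + h (S + 1)))‖ ≤
      ‖v - (w S - η (S + 1) • (g S - h S + h (S + 1)))‖) :
    ⟪g (S + 1), w (S + 1) - u (S + 1)⟫ ≤
      oogdPotential D η g h w u (S + 1) - oogdPotential D η g h w u S := by
  have hη₁ : 0 < η (S + 1) := hη.trans_le hmono
  have hD₀ : 0 ≤ D := (norm_nonneg _).trans (hD _ hu₀ _ hu₀)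
  have hstep := inner_le_of_optimistic_step (g₁ := g (S + 1)) hK hD hη₁ hw₀ hu₀ hu₁ hw₁ hmin
  have hgap : (D ^ 2 - ‖w (S + 1) - u (S + 1)‖ ^ 2) / (2 * η (S + 1)) ≤
      (D ^ 2 - ‖w (S + 1) - u (S + 1)‖ ^ 2) / (2 * η (S + 1 + 1)) := by
    have := pow_le_pow_left₀ (norm_nonneg _) (hD _ hw₁ _ hu₁) 2
    gcongr
  have hpath : 3 * D * pathLength u S / (2 * η (S + 1)) + 5 * D * ‖u (S + 1) - u S‖ / (4 * η (S + 1))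
      ≤ 3 * D * (pathLength u S + ‖u (S + 1) - u S‖) / (2 * η (S + 1 + 1)) := by
    have hP := pathLength_nonneg u S
    calc _ ≤ 3 * D * (pathLength u S + ‖u (S + 1) - u S‖) / (2 * η (S + 1)) := by
          field_simp
          nlinarith [mul_nonneg hD₀ (norm_nonneg (u (S + 1) - u S))]
      _ ≤ _ := by gcongr
  rw [oogdPotential, oogdPotential, pathLength_succ u hS, sum_Ico_succ_top hS]
  linear_combination hstep + hgap + hpath

theorem sum_inner_le_oogdPotential (hK : Convex ℝ K) (hD : ∀ x ∈ K, ∀ y ∈ K, ‖x - y‖ ≤ D)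
    {T : ℕ} (hη : ∀ t, 0 < η t) (hmono : ∀ t, η (t + 1) ≤ η t) (hh₁ : h 1 = 0)
    (hw : ∀ t ∈ Icc 1 T, w t ∈ K) (hu : ∀ t ∈ Icc 1 T, u t ∈ K)
    (hmin : ∀ t ∈ Ico 1 T, ∀ v ∈ K, ‖w (t + 1) - (w t - η (t + 1) • (g t - h t + h (t + 1)))‖ ≤
      ‖v - (w t - η (t + 1) • (g t - h t + h (t + 1)))‖)
    {S : ℕ} (hS : 1 ≤ S) (hST : S ≤ T) :
    ∑ t ∈ Icc 1 S, ⟪g t, w t - u t⟫ ≤ oogdPotential D η g h w u S := by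
  induction S, hS using Nat.le_induction with
  | base =>
    have hw₁ := hw 1 (mem_Icc.2 ⟨le_rfl, hST⟩)
    have hu₁ := hu 1 (mem_Icc.2 ⟨le_rfl, hST⟩)
    have := pow_le_pow_left₀ (norm_nonneg _) (hD _ hw₁ _ hu₁) 2
    have : 0 ≤ (D ^ 2 - ‖w 1 - u 1‖ ^ 2) / (2 * η (1 + 1)) := div_nonneg (by linarith) (by linarith [hη 2])
    simpa [oogdPotential, pathLength, hh₁] using this
  | succ S hS ih =>
    have mem (t) (h₁ : 1 ≤ t) (h₂ : t ≤ S + 1) : t ∈ Icc 1 T := mem_Icc.2 ⟨h₁, by omega⟩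
    rw [sum_Icc_succ_top (by omega)]
    linarith [ih (by omega), inner_le_oogdPotential_succ_sub hK hD hS (hη _) (hmono _)
      (hw S (mem S hS (by omega))) (hu S (mem S hS (by omega))) (hu _ (mem _ (by omega) le_rfl))
      (hw _ (mem _ (by omega) le_rfl)) (hmin S (mem_Ico.2 ⟨hS, by omega⟩))]

theorem oogdPotential_le {T : ℕ} (hη : 0 < η (T + 1)) :
    oogdPotential D η g h w u T ≤ (5 * D ^ 2 + 12 * D * pathLength u T) / (8 * η (T + 1))
      + 2 * η (T + 1) * ‖g T - h T‖ ^ 2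
      + ∑ t ∈ Ico 1 T, (2 * η (t + 1) * ‖g t - h t‖ ^ 2 - ‖w t - w (t + 1)‖ ^ 2 / (4 * η (t + 1))) := by
  have hyoung := real_inner_le_mul_norm_sq_add_norm_sq_div (g T - h T) (w T - u T)
    (mul_pos two_pos hη)
  have hslack : 0 ≤ (D ^ 2 + 3 * ‖w T - u T‖ ^ 2) / (8 * η (T + 1)) := by positivity
  rw [oogdPotential]
  linear_combination hyoung + hslack

end Potential

theorem stmt_15_general {d : ℕ} (T : ℕ) (W : Set (EuclideanSpace ℝ (Fin d)))
    (hWconv : Convex ℝ W)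
    (D : ℝ) (hD : ∀ x ∈ W, ∀ y ∈ W, ‖x - y‖ ≤ D)
    (η : ℕ → ℝ) (hηpos : ∀ t, 0 < η t) (hηmono : ∀ t, η (t + 1) ≤ η t)
    (g h w u : ℕ → EuclideanSpace ℝ (Fin d))
    (hh1 : h 1 = 0)
    (hw1 : w 1 ∈ W)
    (hu : ∀ t ∈ Finset.Icc 1 T, u t ∈ W)
    (hproj : ∀ t ∈ Finset.Icc 1 T, w (t + 1) ∈ W ∧
      ∀ v ∈ W, ‖w (t + 1) - (w t - η (t + 1) • (g t - h t + h (t + 1)))‖ ≤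
        ‖v - (w t - η (t + 1) • (g t - h t + h (t + 1)))‖) :
    ∑ t ∈ Finset.Icc 1 T, ⟪g t, w t - u t⟫ ≤
      (5 * D ^ 2 + 12 * D * ∑ t ∈ Finset.Icc 2 T, ‖u t - u (t - 1)‖) / (8 * η (T + 1))
      + ∑ t ∈ Finset.Icc 1 T, 2 * η (t + 1) * ‖g t - h t‖ ^ 2
      - ∑ t ∈ Finset.Icc 1 (T - 1), (1 / (4 * η (t + 1))) * ‖w t - w (t + 1)‖ ^ 2 := by
  rcases T with _ | T
  · have := hηpos 1
    simp
    positivity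
  have hw : ∀ t ∈ Icc 1 (T + 1), w t ∈ W := by
    rintro (_ | _ | t) ht
    · simp at ht
    · exact hw1
    · exact (hproj (t + 1) (mem_Icc.2 ⟨by omega, by have := (mem_Icc.1 ht).2; omega⟩)).1
  calc _ ≤ oogdPotential D η g h w u (T + 1) :=
        sum_inner_le_oogdPotential hWconv hD hηpos hηmono hh1 hw hu
          (fun t ht => (hproj t (Ico_subset_Icc_self ht)).2) (by omega) le_rfl
    _ ≤ _ := oogdPotential_le (hηpos _)
    _ = _ := by
      rw [Nat.add_sub_cancel, ← Ico_add_one_right_eq_Icc 1 (T + 1),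
        ← Ico_add_one_right_eq_Icc 1 T, sum_Ico_succ_top (by omega : 1 ≤ T + 1), sum_sub_distrib,
        pathLength]
      simp only [one_div_mul_eq_div]
      ring

/-- Dynamic regret of one-step optimistic projected OGD (Lemma `one-step-oogd`):
for a nonempty closed convex set `W` of diameter at most `D`, non-increasing step
sizes `η_t > 0`, hints with `h₁ = 0`, iterates `w_{t+1} = Π_W[w_t − η_{t+1}(g_t − h_t + h_{t+1})]`
and comparators `u_t ∈ W`,
`∑_{t=1}^T ⟨g_t, w_t − u_t⟩ ≤ (5D² + 12D P_T)/(8η_{T+1})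
  + ∑_{t=1}^T 2η_{t+1}‖g_t − h_t‖² − ∑_{t=1}^{T−1} (1/(4η_{t+1}))‖w_t − w_{t+1}‖²`,
where `P_T = ∑_{t=2}^T ‖u_t − u_{t−1}‖`. -/
theorem stmt_15 {d : ℕ} (T : ℕ) (W : Set (EuclideanSpace ℝ (Fin d)))
    (hWne : W.Nonempty) (hWclosed : IsClosed W) (hWconv : Convex ℝ W)
    (D : ℝ) (hD : ∀ x ∈ W, ∀ y ∈ W, ‖x - y‖ ≤ D)
    (η : ℕ → ℝ) (hηpos : ∀ t, 0 < η t) (hηmono : ∀ t, η (t + 1) ≤ η t)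
    (g h w u : ℕ → EuclideanSpace ℝ (Fin d))
    (hh1 : h 1 = 0)
    (hw1 : w 1 ∈ W)
    (hu : ∀ t ∈ Finset.Icc 1 T, u t ∈ W)
    (hproj : ∀ t ∈ Finset.Icc 1 T, w (t + 1) ∈ W ∧
      ∀ v ∈ W, ‖w (t + 1) - (w t - η (t + 1) • (g t - h t + h (t + 1)))‖ ≤
        ‖v - (w t - η (t + 1) • (g t - h t + h (t + 1)))‖) :
    ∑ t ∈ Finset.Icc 1 T, ⟪g t, w t - u t⟫ ≤
      (5 * D ^ 2 + 12 * D * ∑ t ∈ Finset.Icc 2 T, ‖u t - u (t - 1)‖) / (8 * η (T + 1))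
      + ∑ t ∈ Finset.Icc 1 T, 2 * η (t + 1) * ‖g t - h t‖ ^ 2
      - ∑ t ∈ Finset.Icc 1 (T - 1), (1 / (4 * η (t + 1))) * ‖w t - w (t + 1)‖ ^ 2 :=
  stmt_15_general T W hWconv D hD η hηpos hηmono g h w u hh1 hw1 hu hproj
end

section
/- Let g₁, …, g_T be reals and 0 < h₁ ≤ h₂ ≤ ⋯ ≤ h_T with |g_t| ≤ h_t for all t. Define V̄_t = 4h_t² + ∑_{i=1}^{t−1} g_i², B_t = 4 + ∑_{i=1}^{t−1} g_i²/h_i², and α_t = ε/(√(B_t)·log²(B_t)) for a fixed ε > 0. Then ∑_{t=1}^T α_t·g_t²/√(V̄_t) ≤ 4ε·h_T. -/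
/-!
Write `S_t = ∑_{i<t} g_i²` and `Φ(h, S) = h / log (4 + S / h²)`. Since `h_i ≤ h_t` for
`i < t`, `B_t ≥ C_t := 4 + S_t / h_t²`, while `V̄_t = h_t² C_t`; so the `t`-th term is at most
`ε h_t D / (C_t log² C_t)` with `D = g_t² / h_t² ≤ 1`. This is a discrete form of
`d(-1 / log x) = dx / (x log² x)` and is bounded by `(3/2) ε (Φ(h_t, S_t) - Φ(h_t, S_{t+1}))`.
Passing from scale `h_t` to `h_{t+1}` raises `Φ` by at most `(15/8) (h_{t+1} - h_t)`, and
`0 ≤ Φ ≤ 3h/4`, so the sum telescopes to at most `(3/2) (15/8) ε h_T ≤ 4 ε h_T`.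
-/

open Finset Real

lemma four_thirds_lt_log {x : ℝ} (hx : 4 ≤ x) : 4 / 3 < log x := by
  have hlog4 : log 4 = 2 * log 2 := by
    rw [show (4 : ℝ) = 2 ^ 2 by norm_num, log_pow, Nat.cast_ofNat]
  linarith [log_two_gt_d9, log_le_log (by norm_num) hx]

lemma div_mul_log_sq_le_inv_log_sub {C D : ℝ} (hC : 4 ≤ C) (hD₀ : 0 ≤ D) (hD₁ : D ≤ 1) :
    D / (C * log C ^ 2) ≤ 3 / 2 * ((log C)⁻¹ - (log (C + D))⁻¹) := by
  set a := log C
  set b := log (C + D)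
  have ha : 4 / 3 < a := four_thirds_lt_log hC
  have hC₀ : 0 < C := by linarith
  have hab : a ≤ b := log_le_log hC₀ (by linarith)
  have hb_sub_a : D / (C + D) ≤ b - a := by
    have := one_sub_inv_le_log_of_pos (show 0 < (C + D) / C by positivity)
    rw [log_div (by linarith) hC₀.ne', inv_div] at this
    convert this using 1
    field_simp
    ring
  -- `C + D ≤ 5/4 C` and `(5/4)^5 ≤ 4 ≤ C` give `b ≤ a + log (5/4) ≤ 6/5 a`.
  have hb : b ≤ 6 / 5 * a := by
    have h₁ : b ≤ log (5 / 4) + a := by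
      rw [← log_mul (by norm_num) hC₀.ne']
      exact log_le_log (by linarith) (by linarith)
    have h₂ : log ((5 / 4) ^ 5) ≤ a := log_le_log (by norm_num) (by linarith)
    rw [log_pow] at h₂
    push_cast at h₂
    linarith
  have ha₀ : 0 < a := by linarith
  have hb₀ : 0 < b := by linarith
  calc D / (C * a ^ 2) = 3 / 2 * (D / (5 / 4 * C * (6 / 5 * a) * a)) := by
        field_simp; ring
    _ ≤ 3 / 2 * (D / ((C + D) * b * a)) := by
        gcongr
        linarith
    _ = 3 / 2 * (D / (C + D) / (a * b)) := by rw [div_div, mul_comm a b, mul_assoc]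
    _ ≤ 3 / 2 * ((b - a) / (a * b)) := by gcongr
    _ = 3 / 2 * (a⁻¹ - b⁻¹) := by
        field_simp

noncomputable def logPotential (h S : ℝ) : ℝ := h / log (4 + S / h ^ 2)

lemma four_le_four_add_div_sq {S : ℝ} (hS : 0 ≤ S) (h : ℝ) : 4 ≤ 4 + S / h ^ 2 :=
  le_add_of_nonneg_right (by positivity)

lemma logPotential_nonneg {h S : ℝ} (hh : 0 ≤ h) (hS : 0 ≤ S) : 0 ≤ logPotential h S :=
  div_nonneg hh (by linarith [four_thirds_lt_log (four_le_four_add_div_sq hS h)])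

lemma logPotential_le {h S : ℝ} (hh : 0 ≤ h) (hS : 0 ≤ S) :
    logPotential h S ≤ 3 / 4 * h := by
  have := four_thirds_lt_log (four_le_four_add_div_sq hS h)
  rw [logPotential, div_le_iff₀ (by linarith)]
  nlinarith

-- With `r = h' / h`, lowering the scale from `h'` to `h` raises `log (4 + S / h ^ 2)` by at most
-- `log (r ^ 2) ≤ 2 (r - 1)`.
lemma logPotential_sub_le {h h' S : ℝ} (hh : 0 < h) (hh' : h ≤ h') (hS : 0 ≤ S) :
    logPotential h' S - logPotential h S ≤ 15 / 8 * (h' - h) := by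
  set r := h' / h
  set a := log (4 + S / h ^ 2)
  set a' := log (4 + S / h' ^ 2)
  have hh'₀ : 0 < h' := hh.trans_le hh'
  have hr₀ : 0 < r := by positivity
  have ha' : 4 / 3 < a' := four_thirds_lt_log (four_le_four_add_div_sq hS h')
  have ha : 4 / 3 < a := four_thirds_lt_log (four_le_four_add_div_sq hS h)
  have hC : 4 + S / h ^ 2 ≤ r ^ 2 * (4 + S / h' ^ 2) := by
    have hr : 1 ≤ r := (one_le_div hh).mpr hh'
    have : r ^ 2 * (4 + S / h' ^ 2) = 4 * r ^ 2 + S / h ^ 2 := by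
      simp only [r]; field_simp
    nlinarith
  have ha_sub : a - a' ≤ 2 * (r - 1) := by
    have := log_le_log (by positivity) hC
    rw [log_mul (by positivity) (by positivity), log_pow] at this
    push_cast at this
    linarith [log_le_sub_one_of_pos hr₀]
  have hhr : h * (r - 1) = h' - h := by simp only [r]; field_simp
  calc logPotential h' S - logPotential h S = (h' - h) / a' + h * (a - a') / (a * a') := by
        change h' / a' - h / a = _
        field_simp
        ring
    _ ≤ 3 / 4 * (h' - h) + h * (2 * (r - 1)) * (9 / 16) := by
        gcongr
        · rw [div_le_iff₀ (by linarith)]; nlinarith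
        · rw [div_le_iff₀ (by positivity)]
          have hr : 0 ≤ h * (2 * (r - 1)) := by rw [mul_left_comm, hhr]; linarith
          nlinarith [mul_le_mul_of_nonneg_left ha_sub hh.le,
            mul_lt_mul'' ha ha' (by norm_num) (by norm_num)]
    _ = 15 / 8 * (h' - h) := by rw [← hhr]; ring

lemma mul_sq_div_le_logPotential_sub {ε g h S B : ℝ} (hε : 0 ≤ ε) (hh : 0 < h) (hS : 0 ≤ S)
    (hg : g ^ 2 ≤ h ^ 2) (hB : 4 + S / h ^ 2 ≤ B) :
    ε / (√B * log B ^ 2) * g ^ 2 / √(4 * h ^ 2 + S) ≤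
      3 / 2 * ε * (logPotential h S - logPotential h (S + g ^ 2)) := by
  set C := 4 + S / h ^ 2
  set D := g ^ 2 / h ^ 2
  have hC : 4 ≤ C := four_le_four_add_div_sq hS h
  have hlogC : 0 < log C := by linarith [four_thirds_lt_log hC]
  have hsqrtC : √C * √C = C := Real.mul_self_sqrt (by linarith)
  have hV : √(4 * h ^ 2 + S) = h * √C := by
    rw [show 4 * h ^ 2 + S = h ^ 2 * C by simp only [C]; field_simp,
      Real.sqrt_mul (by positivity), Real.sqrt_sq hh.le]
  have hCD : C + D = 4 + (S + g ^ 2) / h ^ 2 := by simp only [C, D]; ring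
  calc ε / (√B * log B ^ 2) * g ^ 2 / √(4 * h ^ 2 + S)
      = ε * (g ^ 2 / (√B * log B ^ 2 * (h * √C))) := by rw [hV]; ring
    _ ≤ ε * (g ^ 2 / (√C * log C ^ 2 * (h * √C))) := by gcongr
    _ = ε * (g ^ 2 / (h * (√C * √C) * log C ^ 2)) := by ring
    _ = ε * (h * (D / (C * log C ^ 2))) := by
        rw [hsqrtC]
        simp only [D]
        field_simp
    _ ≤ ε * (h * (3 / 2 * ((log C)⁻¹ - (log (C + D))⁻¹))) := by
        gcongr
        exact div_mul_log_sq_le_inv_log_sub hC (by positivity)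
          ((div_le_one (by positivity)).mpr hg)
    _ = 3 / 2 * ε * (logPotential h S - logPotential h (S + g ^ 2)) := by
        rw [hCD, logPotential, logPotential]
        ring

lemma sum_Icc_one_add_one_sub_one {M : Type*} [AddCommMonoid M] (f : ℕ → M) {t : ℕ}
    (ht : 1 ≤ t) : ∑ i ∈ Icc 1 (t + 1 - 1), f i = ∑ i ∈ Icc 1 (t - 1), f i + f t := by
  obtain ⟨u, rfl⟩ : ∃ u, t = u + 1 := ⟨t - 1, by omega⟩
  simp only [Nat.add_sub_cancel]
  exact sum_Icc_succ_top (by omega) _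

lemma sum_div_sq_le_sum_div_sq {ι : Type*} (s : Finset ι) (g : ι → ℝ) {h : ι → ℝ}
    {c : ℝ} (hh : ∀ i ∈ s, 0 < h i) (hhc : ∀ i ∈ s, h i ≤ c) :
    (∑ i ∈ s, g i ^ 2) / c ^ 2 ≤ ∑ i ∈ s, g i ^ 2 / h i ^ 2 := by
  rw [sum_div]
  refine sum_le_sum fun i hi => ?_
  have := hh i hi
  have := hhc i hi
  gcongr

lemma sum_le_of_le_logPotential_sub {T : ℕ} (hT : 1 ≤ T) {H S x : ℕ → ℝ} {c : ℝ}
    (hc : 0 ≤ c) (hH₁ : 0 < H 1) (hH : MonotoneOn H (Icc 1 T)) (hS : ∀ t, 0 ≤ S t)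
    (hx : ∀ t ∈ Icc 1 T,
      x t ≤ c * (logPotential (H t) (S t) - logPotential (H t) (S (t + 1)))) :
    ∑ t ∈ Icc 1 T, x t ≤ 15 / 8 * c * H T := by
  -- Freezing the scale after time `T` makes the Lipschitz bound `logPotential_sub_le` usable at
  -- every step, so that `x t ≤ c (P t - P (t + 1))` telescopes.
  set H' : ℕ → ℝ := fun t => H (min t T)
  set P : ℕ → ℝ := fun t => logPotential (H' t) (S t) - 15 / 8 * H' t
  have hH'_mono {s t : ℕ} (hs : 1 ≤ s) (hst : s ≤ t) : H' s ≤ H' t :=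
    hH (mem_Icc.2 ⟨le_min hs hT, min_le_right _ _⟩)
      (mem_Icc.2 ⟨le_min (hs.trans hst) hT, min_le_right _ _⟩) (min_le_min_right T hst)
  have hH'₁ : H' 1 = H 1 := by simp only [H', min_eq_left hT]
  have hH'_last : H' (T + 1) = H T := by simp only [H', min_eq_right T.le_succ]
  have hH'_pos {t : ℕ} (ht : 1 ≤ t) : 0 < H' t :=
    (hH'₁ ▸ hH₁).trans_le (hH'_mono le_rfl ht)
  have hstep : ∀ t ∈ Icc 1 T, x t ≤ c * (P t - P (t + 1)) := by
    intro t ht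
    obtain ⟨ht₁, htT⟩ := mem_Icc.1 ht
    have hH't : H' t = H t := by simp only [H', min_eq_left htT]
    have := logPotential_sub_le (hH't ▸ hH'_pos ht₁) (hH't ▸ hH'_mono ht₁ t.le_succ)
      (hS (t + 1))
    refine (hx t ht).trans (mul_le_mul_of_nonneg_left ?_ hc)
    simp only [P, hH't] at this ⊢
    linarith
  have h_tele : ∑ t ∈ Icc 1 T, (P t - P (t + 1)) = P 1 - P (T + 1) := by
    rw [← neg_sub, ← sum_Icc_sub hT P, ← sum_neg_distrib]
    simp only [neg_sub]
  have hP₁ : P 1 ≤ 0 := by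
    have := logPotential_le (hH'_pos le_rfl).le (hS 1)
    simp only [P]
    linarith [hH'_pos le_rfl]
  have hP_last : -(15 / 8 * H T) ≤ P (T + 1) := by
    have := logPotential_nonneg (hH'_pos T.succ_pos).le (hS (T + 1))
    simp only [P, hH'_last] at this ⊢
    linarith
  calc ∑ t ∈ Icc 1 T, x t ≤ ∑ t ∈ Icc 1 T, c * (P t - P (t + 1)) := sum_le_sum hstep
    _ = c * (P 1 - P (T + 1)) := by rw [← mul_sum, h_tele]
    _ ≤ c * (15 / 8 * H T) := by gcongr; linarith
    _ = 15 / 8 * c * H T := by ring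

/-- Tuning lemma (Lemma 21 of Cutkosky et al. 2024): for `|g_t| ≤ h_t` with
`0 < h₁ ≤ h₂ ≤ ⋯ ≤ h_T`, setting `V̄_t = 4h_t² + ∑_{i<t} g_i²`,
`B_t = 4 + ∑_{i<t} g_i²/h_i²` and `α_t = ε/(√B_t · log² B_t)`,
`∑_{t=1}^T α_t g_t² / √V̄_t ≤ 4ε h_T`. -/
theorem stmt_17 (T : ℕ) (hT : 1 ≤ T) (g h : ℕ → ℝ) (ε : ℝ) (hε : 0 < ε)
    (hh1 : 0 < h 1)
    (hhmono : ∀ s ∈ Finset.Icc 1 T, ∀ t ∈ Finset.Icc 1 T, s ≤ t → h s ≤ h t)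
    (hgh : ∀ t ∈ Finset.Icc 1 T, |g t| ≤ h t)
    (Vbar B α : ℕ → ℝ)
    (hVbar : ∀ t, Vbar t = 4 * (h t) ^ 2 + ∑ i ∈ Finset.Icc 1 (t - 1), (g i) ^ 2)
    (hB : ∀ t, B t = 4 + ∑ i ∈ Finset.Icc 1 (t - 1), (g i) ^ 2 / (h i) ^ 2)
    (hα : ∀ t, α t = ε / (Real.sqrt (B t) * (Real.log (B t)) ^ 2)) :
    ∑ t ∈ Finset.Icc 1 T, α t * (g t) ^ 2 / Real.sqrt (Vbar t) ≤ 4 * ε * h T := by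
  set S : ℕ → ℝ := fun t => ∑ i ∈ Icc 1 (t - 1), g i ^ 2
  have hpos {t : ℕ} (ht : t ∈ Icc 1 T) : 0 < h t :=
    hh1.trans_le (hhmono 1 (mem_Icc.2 ⟨le_rfl, hT⟩) t ht (mem_Icc.1 ht).1)
  have hS_nonneg (t : ℕ) : 0 ≤ S t := sum_nonneg fun i _ => sq_nonneg (g i)
  refine (sum_le_of_le_logPotential_sub hT (by positivity : 0 ≤ 3 / 2 * ε) hh1 hhmono
    hS_nonneg fun t ht => ?_).trans (by nlinarith [hpos (mem_Icc.2 ⟨hT, le_rfl⟩)])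
  obtain ⟨ht₁, htT⟩ := mem_Icc.1 ht
  have hg : g t ^ 2 ≤ h t ^ 2 := sq_le_sq.2 (by rw [abs_of_pos (hpos ht)]; exact hgh t ht)
  have hBt : 4 + S t / h t ^ 2 ≤ B t := by
    have hsub : ∀ i ∈ Icc 1 (t - 1), i ∈ Icc 1 T ∧ i ≤ t := fun i hi => by
      simp only [mem_Icc] at hi ⊢; omega
    rw [hB]
    exact add_le_add_right (sum_div_sq_le_sum_div_sq _ g (fun i hi => hpos (hsub i hi).1)
      fun i hi => hhmono i (hsub i hi).1 t ht (hsub i hi).2) 4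
  rw [hα, hVbar, show S (t + 1) = S t + g t ^ 2 from
    sum_Icc_one_add_one_sub_one _ ht₁]
  exact mul_sq_div_le_logPotential_sub hε.le (hpos ht) (hS_nonneg t) hg hBt
end
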